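/- Let n ≥ 2, a > 0, and α = (α_1,…,α_n) ∈ (0,∞)^n with a α_k < 1 for all k; set β_k := (1 − a α_k)/α_k. Let μ ∈ ℝ^n and let Σ ∈ ℝ^{n×n} be a symmetric positive definite matrix. Define Ψ(θ) = −a Log(1 − i⟨α⋄μ, θ⟩ + ½‖θ‖²_{α⋄Σ}) − Σ_{k=1}^n β_k Log(1 − i α_k μ_k θ_k + ½ α_k θ_k² Σ_{kk}) for θ ∈ ℝ^n. Let t > 0. If (a/n + min_{1≤k≤n} β_k) · t > 1/2, then the function θ ↦ exp(t Ψ(θ)) is Lebesgue integrable on ℝ^n. -/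

import Mathlib

open MeasureTheory Complex

noncomputable section

/-- Euclidean inner product on `ℝ^n`. -/
def dot {n : ℕ} (x y : Fin n → ℝ) : ℝ := ∑ k, x k * y k

/-- Quadratic form `‖θ‖²_A = θ A θᵀ`. -/
def quad {n : ℕ} (A : Matrix (Fin n) (Fin n) ℝ) (θ : Fin n → ℝ) : ℝ :=
  ∑ k, ∑ l, θ k * A k l * θ l

/-- Outer product `t ⋄ μ` of vectors, `(t ⋄ μ)_k = t_k μ_k`. -/
def diaV {n : ℕ} (t μ : Fin n → ℝ) : Fin n → ℝ := fun k => t k * μ k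

/-- Outer product `t ⋄ Σ`, `(t ⋄ Σ)_{kl} = Σ_{kl} min(t_k, t_l)`. -/
def diaM {n : ℕ} (t : Fin n → ℝ) (A : Matrix (Fin n) (Fin n) ℝ) :
    Matrix (Fin n) (Fin n) ℝ := Matrix.of fun k l => A k l * min (t k) (t l)

/-- Lévy exponent of the weak variance-alpha-gamma process `WVAG^n(a, α, μ, Σ)`:
`Ψ(θ) = -a Log(1 - i⟨α⋄μ,θ⟩ + ½‖θ‖²_{α⋄Σ}) - ∑ₖ βₖ Log(1 - i αₖ μₖ θₖ + ½ αₖ θₖ² Σₖₖ)`,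
where `βₖ = (1 - a αₖ)/αₖ`. -/
def Ψwvag {n : ℕ} (a : ℝ) (α μ : Fin n → ℝ) (S : Matrix (Fin n) (Fin n) ℝ)
    (θ : Fin n → ℝ) : ℂ :=
  -(a : ℂ) * Complex.log (1 - Complex.I * (dot (diaV α μ) θ : ℂ) +
      (quad (diaM α S) θ : ℂ) / 2) -
    ∑ k, (((1 - a * α k) / α k : ℝ) : ℂ) *
      Complex.log (1 - Complex.I * ((α k * μ k * θ k : ℝ) : ℂ) +
        ((α k * θ k ^ 2 * S k k : ℝ) : ℂ) / 2)

/-!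
With `β = min_k βₖ`, `|exp(tΨ(θ))| = |w₀|^(-ta) ∏ₖ |wₖ|^(-tβₖ)`, where `w₀, wₖ` are the arguments of
the logarithms in `Ψ`. Each has real part `1 + q/2` with `q` a value of the quadratic form of
`α⋄Σ` (for `wₖ`, at the vector `θₖ eₖ`), and `α⋄Σ` is positive definite: writing
`min(αₖ, αₗ) = ∫ 1_{(0,αₖ)} 1_{(0,αₗ)}` exhibits `(α - min α)⋄Σ` as an integral of positive
semidefinite forms, so `α⋄Σ ≥ (min α) Σ`. Hence every factor is at least `1 + e θₖ²` for some
`e > 0`, and splitting `|w₀|^(-ta)` evenly over the `n` coordinates dominates `|exp(tΨ)|` by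
`∏ₖ (1 + e θₖ²)^(-t(a/n + β))`, a product of one-dimensional functions that are integrable
because `t(a/n + β) > 1/2`.
-/

theorem quad_smul {n : ℕ} (A : Matrix (Fin n) (Fin n) ℝ) (r : ℝ) (θ : Fin n → ℝ) :
    quad A (r • θ) = r ^ 2 * quad A θ := by
  simp only [quad, Finset.mul_sum, Pi.smul_apply, smul_eq_mul]
  exact Finset.sum_congr rfl fun _ _ => Finset.sum_congr rfl fun _ _ => by ring

theorem quad_single {n : ℕ} (A : Matrix (Fin n) (Fin n) ℝ) (k : Fin n) (x : ℝ) :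
    quad A (Pi.single k x) = A k k * x ^ 2 := by
  simp only [quad, Pi.single_apply, ite_mul, zero_mul, mul_ite, mul_zero, Finset.sum_ite_eq',
    Finset.mem_univ, ↓reduceIte]
  ring

theorem continuous_quad {n : ℕ} (A : Matrix (Fin n) (Fin n) ℝ) : Continuous (quad A) := by
  unfold quad
  fun_prop

theorem quad_eq_dotProduct_mulVec {n : ℕ} (A : Matrix (Fin n) (Fin n) ℝ) (θ : Fin n → ℝ) :
    quad A θ = dotProduct θ (A.mulVec θ) := by
  simp only [quad, dotProduct, Matrix.mulVec, Finset.mul_sum]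
  exact Finset.sum_congr rfl fun _ _ => Finset.sum_congr rfl fun _ _ => by ring

theorem Matrix.PosDef.quad_pos {n : ℕ} {S : Matrix (Fin n) (Fin n) ℝ} (hS : S.PosDef)
    {θ : Fin n → ℝ} (hθ : θ ≠ 0) : 0 < quad S θ := by
  simpa [quad_eq_dotProduct_mulVec] using hS.dotProduct_mulVec_pos hθ

theorem exists_pos_mul_norm_sq_le {E : Type*} [NormedAddCommGroup E] [NormedSpace ℝ E]
    [FiniteDimensional ℝ E] {f : E → ℝ} (hf : Continuous f)
    (hhom : ∀ (r : ℝ) x, f (r • x) = r ^ 2 * f x) (hpos : ∀ x ≠ 0, 0 < f x) :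
    ∃ c > 0, ∀ x, c * ‖x‖ ^ 2 ≤ f x := by
  have hf0 : f 0 = 0 := by simpa using hhom 0 0
  rcases subsingleton_or_nontrivial E with hE | hE
  · exact ⟨1, one_pos, fun x => by simp [Subsingleton.elim x 0, hf0]⟩
  obtain ⟨u, hu, humin⟩ := (isCompact_sphere (0 : E) 1).exists_isMinOn
    (NormedSpace.sphere_nonempty.2 zero_le_one) hf.continuousOn
  have hu1 : ‖u‖ = 1 := by simpa using hu
  refine ⟨f u, hpos u (norm_ne_zero_iff.1 (by simp [hu1])), fun x => ?_⟩
  rcases eq_or_ne x 0 with rfl | hx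
  · simp [hf0]
  have hxn : 0 < ‖x‖ := norm_pos_iff.2 hx
  have hmin : f u ≤ f (‖x‖⁻¹ • x) :=
    humin (by simp [norm_smul, inv_mul_cancel₀ hxn.ne'])
  calc f u * ‖x‖ ^ 2 ≤ f (‖x‖⁻¹ • x) * ‖x‖ ^ 2 := by gcongr
    _ = f x := by rw [hhom]; field_simp

theorem exists_pos_mul_norm_sq_le_quad {n : ℕ} {A : Matrix (Fin n) (Fin n) ℝ}
    (hA : ∀ θ ≠ 0, 0 < quad A θ) : ∃ c > 0, ∀ θ, c * ‖θ‖ ^ 2 ≤ quad A θ :=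
  exists_pos_mul_norm_sq_le (continuous_quad A) (quad_smul A) hA

theorem indicator_Ioo_mul_indicator_Ioo (b c : ℝ) :
    (fun s => (Set.Ioo 0 b).indicator (1 : ℝ → ℝ) s * (Set.Ioo 0 c).indicator 1 s) =
      (Set.Ioo 0 (min b c)).indicator 1 := by
  rw [← max_self 0, ← Set.Ioo_inter_Ioo, Set.inter_indicator_one, max_self]
  rfl

theorem integrable_indicator_Ioo_mul_indicator_Ioo (b c : ℝ) :
    Integrable fun s => (Set.Ioo 0 b).indicator (1 : ℝ → ℝ) s * (Set.Ioo 0 c).indicator 1 s := by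
  rw [indicator_Ioo_mul_indicator_Ioo]
  exact (integrableOn_const (by simp [Real.volume_Ioo])).integrable_indicator measurableSet_Ioo

theorem integral_indicator_Ioo_mul_indicator_Ioo {b c : ℝ} (hb : 0 ≤ b) (hc : 0 ≤ c) :
    ∫ s, (Set.Ioo 0 b).indicator (1 : ℝ → ℝ) s * (Set.Ioo 0 c).indicator 1 s = min b c := by
  rw [indicator_Ioo_mul_indicator_Ioo, integral_indicator_one measurableSet_Ioo,
    Real.volume_real_Ioo]
  simp [hb, hc]

theorem quad_diaM_nonneg {n : ℕ} {S : Matrix (Fin n) (Fin n) ℝ} (hS : ∀ θ, 0 ≤ quad S θ)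
    {τ : Fin n → ℝ} (hτ : ∀ k, 0 ≤ τ k) (θ : Fin n → ℝ) : 0 ≤ quad (diaM τ S) θ := by
  set χ : Fin n → ℝ → ℝ := fun k => (Set.Ioo 0 (τ k)).indicator 1
  have hint : ∀ k l, Integrable fun s => θ k * S k l * θ l * (χ k s * χ l s) := fun k l =>
    (integrable_indicator_Ioo_mul_indicator_Ioo _ _).const_mul _
  have hrepr : quad (diaM τ S) θ = ∫ s, quad S fun k => θ k * χ k s := by
    have hterm : ∀ s k l, θ k * χ k s * S k l * (θ l * χ l s) =
        θ k * S k l * θ l * (χ k s * χ l s) := fun _ _ _ => by ring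
    simp only [quad, hterm]
    rw [integral_finsetSum _ fun k _ => integrable_finsetSum _ fun l _ => hint k l]
    refine Finset.sum_congr rfl fun k _ => ?_
    rw [integral_finsetSum _ fun l _ => hint k l]
    refine Finset.sum_congr rfl fun l _ => ?_
    rw [integral_const_mul, integral_indicator_Ioo_mul_indicator_Ioo (hτ k) (hτ l), diaM,
      Matrix.of_apply]
    ring
  rw [hrepr]
  exact integral_nonneg fun s => hS _

theorem quad_diaM_add_const {n : ℕ} (S : Matrix (Fin n) (Fin n) ℝ) (τ : Fin n → ℝ) (m : ℝ)
    (θ : Fin n → ℝ) :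
    quad (diaM (fun k => τ k + m) S) θ = m * quad S θ + quad (diaM τ S) θ := by
  simp only [quad, diaM, Matrix.of_apply, min_add_add_right, Finset.mul_sum,
    ← Finset.sum_add_distrib]
  exact Finset.sum_congr rfl fun _ _ => Finset.sum_congr rfl fun _ _ => by ring

theorem quad_diaM_single {n : ℕ} (τ : Fin n → ℝ) (S : Matrix (Fin n) (Fin n) ℝ) (k : Fin n)
    (x : ℝ) : quad (diaM τ S) (Pi.single k x) = τ k * x ^ 2 * S k k := by
  rw [quad_single, diaM, Matrix.of_apply, min_self]
  ring

theorem quad_diaM_pos {n : ℕ} {S : Matrix (Fin n) (Fin n) ℝ} (hS : ∀ θ ≠ 0, 0 < quad S θ)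
    {α : Fin n → ℝ} (hα : ∀ k, 0 < α k) {θ : Fin n → ℝ} (hθ : θ ≠ 0) :
    0 < quad (diaM α S) θ := by
  have : Nonempty (Fin n) := by
    by_contra h
    exact hθ (funext fun k => (h ⟨k⟩).elim)
  obtain ⟨k₀, hk₀⟩ := Finite.exists_min α
  have hS' : ∀ θ, 0 ≤ quad S θ := fun θ => by
    rcases eq_or_ne θ 0 with rfl | h
    · simp [quad]
    · exact (hS θ h).le
  have hsplit := quad_diaM_add_const S (fun k => α k - α k₀) (α k₀) θ
  simp only [sub_add_cancel] at hsplit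
  rw [hsplit]
  exact add_pos_of_pos_of_nonneg (mul_pos (hα k₀) (hS θ hθ))
    (quad_diaM_nonneg hS' (fun k => sub_nonneg.2 (hk₀ k)) θ)

theorem exists_pos_mul_sq_apply_le_quad_diaM {n : ℕ} {S : Matrix (Fin n) (Fin n) ℝ}
    (hS : S.PosDef) {α : Fin n → ℝ} (hα : ∀ k, 0 < α k) :
    ∃ c > 0, ∀ θ k, c * θ k ^ 2 ≤ quad (diaM α S) θ := by
  obtain ⟨c, hc, hcoerc⟩ :=
    exists_pos_mul_norm_sq_le_quad fun _ => quad_diaM_pos (fun _ => hS.quad_pos) hα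
  refine ⟨c, hc, fun θ k => le_trans ?_ (hcoerc θ)⟩
  have hθk : θ k ^ 2 ≤ ‖θ‖ ^ 2 := by
    simpa only [Real.norm_eq_abs, sq_abs] using
      pow_le_pow_left₀ (norm_nonneg _) (norm_le_pi_norm θ k) 2
  gcongr

def wvagFactor (x y : ℝ) : ℂ := 1 - Complex.I * x + y / 2

theorem Ψwvag_eq {n : ℕ} (a : ℝ) (α μ : Fin n → ℝ) (S : Matrix (Fin n) (Fin n) ℝ)
    (θ : Fin n → ℝ) :
    Ψwvag a α μ S θ = -(a : ℂ) * log (wvagFactor (dot (diaV α μ) θ) (quad (diaM α S) θ)) -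
      ∑ k, (((1 - a * α k) / α k : ℝ) : ℂ) *
        log (wvagFactor (α k * μ k * θ k) (α k * θ k ^ 2 * S k k)) := rfl

theorem one_add_half_le_norm_wvagFactor (x y : ℝ) : 1 + y / 2 ≤ ‖wvagFactor x y‖ := by
  have hre : (wvagFactor x y).re = 1 + y / 2 := by simp [wvagFactor]
  exact hre ▸ re_le_norm _

theorem re_Ψwvag {n : ℕ} (a : ℝ) (α μ : Fin n → ℝ) (S : Matrix (Fin n) (Fin n) ℝ)
    (θ : Fin n → ℝ) :
    (Ψwvag a α μ S θ).re = -(a * Real.log ‖wvagFactor (dot (diaV α μ) θ) (quad (diaM α S) θ)‖) -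
      ∑ k, (1 - a * α k) / α k *
        Real.log ‖wvagFactor (α k * μ k * θ k) (α k * θ k ^ 2 * S k k)‖ := by
  simp only [Ψwvag_eq, sub_re, neg_mul, neg_re, re_ofReal_mul, re_sum, log_re]

theorem measurable_Ψwvag {n : ℕ} (a : ℝ) (α μ : Fin n → ℝ) (S : Matrix (Fin n) (Fin n) ℝ) :
    Measurable (Ψwvag a α μ S) := by
  unfold Ψwvag dot diaV quad
  fun_prop

theorem integrable_one_add_mul_sq_rpow_neg {e p : ℝ} (he : 0 < e) (hp : 1 / 2 < p) :
    Integrable fun x : ℝ => (1 + e * x ^ 2) ^ (-p) := by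
  have h := (integrable_rpow_neg_one_add_norm_sq (E := ℝ) (μ := volume) (r := 2 * p)
    (by rw [Module.finrank_self, Nat.cast_one]; linarith)).comp_mul_left' (Real.sqrt_pos.2 he).ne'
  simpa [Real.norm_eq_abs, mul_pow, Real.sq_sqrt he.le, show -(2 * p) / 2 = -p by ring] using h

theorem integrable_prod_one_add_mul_sq_rpow_neg {ι : Type*} [Fintype ι] {e p : ℝ} (he : 0 < e)
    (hp : 1 / 2 < p) : Integrable fun θ : ι → ℝ => ∏ k, (1 + e * θ k ^ 2) ^ (-p) :=
  Integrable.fintype_prod fun _ => integrable_one_add_mul_sq_rpow_neg he hp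

theorem exp_le_prod_rpow_of_le {ι : Type*} [Fintype ι] [Nonempty ι] {t a β A : ℝ}
    {b u B : ι → ℝ} (ht : 0 ≤ t) (ha : 0 ≤ a) (hβ : ∀ k, β ≤ b k) (hb : ∀ k, 0 ≤ b k)
    (hu : ∀ k, 1 ≤ u k) (hA : ∀ k, u k ≤ A) (hB : ∀ k, u k ≤ B k) :
    Real.exp (t * (-(a * Real.log A) - ∑ k, b k * Real.log (B k))) ≤
      ∏ k, u k ^ (-(t * (a / Fintype.card ι + β))) := by
  have hN : (Fintype.card ι : ℝ) ≠ 0 := by positivity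
  have hterm : ∀ k, t * ((a / Fintype.card ι + β) * Real.log (u k)) ≤
      t * (a / Fintype.card ι * Real.log A + b k * Real.log (B k)) := fun k => by
    have hL : 0 ≤ Real.log (u k) := Real.log_nonneg (hu k)
    have hLA := Real.log_le_log (by linarith [hu k]) (hA k)
    have hLB := Real.log_le_log (by linarith [hu k]) (hB k)
    gcongr
    rw [add_mul]
    refine add_le_add (by gcongr) ?_
    calc β * Real.log (u k) ≤ b k * Real.log (u k) := by gcongr; exact hβ k
      _ ≤ b k * Real.log (B k) := by gcongr; exact hb k
  calc Real.exp (t * (-(a * Real.log A) - ∑ k, b k * Real.log (B k)))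
      = ∏ k, Real.exp (-(t * (a / Fintype.card ι * Real.log A + b k * Real.log (B k)))) := by
        rw [← Real.exp_sum, Finset.sum_neg_distrib, ← Finset.mul_sum, Finset.sum_add_distrib,
          Finset.sum_const, Finset.card_univ, nsmul_eq_mul, ← mul_assoc, mul_div_cancel₀ _ hN]
        ring_nf
    _ ≤ ∏ k, Real.exp (Real.log (u k) * -(t * (a / Fintype.card ι + β))) :=
        Finset.prod_le_prod (fun _ _ => (Real.exp_pos _).le) fun k _ =>
          Real.exp_le_exp.2 (by linarith [hterm k])
    _ = ∏ k, u k ^ (-(t * (a / Fintype.card ι + β))) :=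
        Finset.prod_congr rfl fun k _ => (Real.rpow_def_of_pos (by linarith [hu k]) _).symm

/-- Fourier invertibility of the `WVAG^n(a,α,μ,Σ)` distribution at time `t`:
if `(a/n + min_k β_k) t > 1/2`, then `θ ↦ exp(t Ψ(θ))` is Lebesgue integrable. -/
theorem stmt4 {n : ℕ} (hn : 2 ≤ n) (a : ℝ) (ha : 0 < a) (α : Fin n → ℝ)
    (hα : ∀ k, 0 < α k) (hsmall : ∀ k, a * α k < 1) (μ : Fin n → ℝ)
    (S : Matrix (Fin n) (Fin n) ℝ) (hS : S.PosDef) (t : ℝ) (ht : 0 < t)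
    (hcond : (a / n + ⨅ k, (1 - a * α k) / α k) * t > 1 / 2) :
    Integrable (fun θ : Fin n → ℝ => Complex.exp ((t : ℂ) * Ψwvag a α μ S θ)) := by
  have : Nonempty (Fin n) := ⟨⟨0, by omega⟩⟩
  obtain ⟨c, hc, hcoord⟩ := exists_pos_mul_sq_apply_le_quad_diaM hS hα
  have hβ : ∀ k, ⨅ j, (1 - a * α j) / α j ≤ (1 - a * α k) / α k :=
    ciInf_le (Set.finite_range _).bddBelow
  have hp : 1 / 2 < t * (a / Fintype.card (Fin n) + ⨅ k, (1 - a * α k) / α k) := by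
    rw [Fintype.card_fin]
    linarith
  refine (integrable_prod_one_add_mul_sq_rpow_neg (half_pos hc) hp).mono'
    ((measurable_Ψwvag a α μ S).const_mul _).cexp.aestronglyMeasurable
    (ae_of_all _ fun θ => ?_)
  rw [norm_exp, re_ofReal_mul, re_Ψwvag]
  refine exp_le_prod_rpow_of_le ht.le ha.le hβ
    (fun k => (div_pos (by linarith [hsmall k]) (hα k)).le) (fun k => ?_) (fun k => ?_)
    (fun k => le_trans ?_ (one_add_half_le_norm_wvagFactor _ _))
  · exact le_add_of_nonneg_right (by positivity)
  · linarith [hcoord θ k, one_add_half_le_norm_wvagFactor (dot (diaV α μ) θ) (quad (diaM α S) θ)]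
  · have hk := hcoord (Pi.single k (θ k)) k
    rw [quad_diaM_single, Pi.single_eq_same] at hk
    linarith
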